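/- The complete p-partite graph K_{n/p,...,n/p} on n vertices (p parts of size n/p, p ≥ 2) has routing number at most 6. -/

import Mathlib

/-!
Every permutation is a product of two involutions (reflect each cycle about a base point), so it
suffices to route an involution `τ` in three matchings, as `τ = g (g τ g) g` where `g` and `g τ g`
are involutions moving every vertex they move into another part.

Such a `g` is built one transposition at a time. Take a vertex `u` that `τ` moves inside its own
part, in a part with the most such vertices, and swap it with a vertex `y` whose `τ`-orbit avoids
the part of `u`, preferring a `y` that `τ` also moves inside its (necessarily different) part.
Conjugating `τ` by this swap frees `u` and `τ u`, and it preserves the counting condition that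
every part `q` holds at most as many vertices moved inside `q` as there are vertices whose
`τ`-orbit avoids `q`. That condition holds at the start because no part contains more than half
of the vertices.
-/

open Finset

variable {V : Type*}

/-- A stage of a sorting network on a graph `G`: a finite set of vertex-disjoint
edges of `G`, each either directed (compare-exchange) or undirected (swap). -/
structure Stage {V : Type*} (G : SimpleGraph V) where
  pairs : Finset (V × V)
  adj : ∀ p ∈ pairs, G.Adj p.1 p.2
  directed : V × V → Bool
  disj : ∀ p ∈ pairs, ∀ q ∈ pairs, p ≠ q →
    p.1 ≠ q.1 ∧ p.1 ≠ q.2 ∧ p.2 ≠ q.1 ∧ p.2 ≠ q.2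

open scoped Classical in
/-- Apply a stage to a configuration of keys `f : V → ℕ`.  For a directed pair
`(u,v)` the smaller key goes to `u` and the larger to `v`; an undirected pair
unconditionally swaps its keys. -/
noncomputable def Stage.apply {G : SimpleGraph V} (s : Stage G) (f : V → ℕ) (v : V) : ℕ :=
  if h1 : ∃ p, p ∈ s.pairs ∧ p.1 = v then
    (if s.directed h1.choose then min (f h1.choose.1) (f h1.choose.2) else f h1.choose.2)
  else if h2 : ∃ p, p ∈ s.pairs ∧ p.2 = v then
    (if s.directed h2.choose then max (f h2.choose.1) (f h2.choose.2) else f h2.choose.1)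
  else f v

noncomputable def runNetwork {G : SimpleGraph V} (L : List (Stage G)) (f : V → ℕ) : V → ℕ :=
  L.foldl (fun g s => s.apply g) f

/-- `L` is a sorting network on `(G, π)`: for every injective assignment of keys,
after running all stages, the key at a vertex of smaller `π`-rank is smaller. -/
def IsSortingNetwork {n : ℕ} (G : SimpleGraph V) (π : V ≃ Fin n) (L : List (Stage G)) : Prop :=
  ∀ f : V → ℕ, Function.Injective f →
    ∀ u w : V, π u < π w → runNetwork L f u < runNetwork L f w

/-- Minimal depth of a sorting network on `(G, π)`. -/
noncomputable def stP {n : ℕ} (G : SimpleGraph V) (π : V ≃ Fin n) : ℕ :=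
  sInf {t | ∃ L : List (Stage G), L.length = t ∧ IsSortingNetwork G π L}

/-- The sorting number of `G` : the minimum over sorted orders `π` of the
minimal depth of a sorting network on `(G, π)`. -/
noncomputable def st [Fintype V] (G : SimpleGraph V) : ℕ :=
  sInf {t | ∃ π : V ≃ Fin (Fintype.card V), ∃ L : List (Stage G),
    L.length = t ∧ IsSortingNetwork G π L}

/-- A matching step: an involution of the vertices moving pebbles only along edges. -/
def IsMatchingStep (G : SimpleGraph V) (σ : Equiv.Perm V) : Prop :=
  (∀ v, σ (σ v) = v) ∧ ∀ v, σ v ≠ v → G.Adj v (σ v)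

/-- Position of a pebble starting at `v` after applying the matching steps in `L`. -/
def finalPos (L : List (Equiv.Perm V)) (v : V) : V :=
  L.foldl (fun p σ => σ p) v

/-- `t` matching steps of `G` suffice to route every pebble from `v` to `σ v`. -/
def RoutesIn (G : SimpleGraph V) (σ : Equiv.Perm V) (t : ℕ) : Prop :=
  ∃ L : List (Equiv.Perm V), L.length = t ∧ (∀ τ ∈ L, IsMatchingStep G τ) ∧
    ∀ v, finalPos L v = σ v

/-- Routing time of the permutation `σ` on `G`. -/
noncomputable def rtP (G : SimpleGraph V) (σ : Equiv.Perm V) : ℕ :=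
  sInf {t | RoutesIn G σ t}

/-- The routing number of `G`. -/
noncomputable def rt [Fintype V] [DecidableEq V] (G : SimpleGraph V) : ℕ :=
  Finset.univ.sup fun σ : Equiv.Perm V => rtP G σ

/-- The complete `p`-partite graph with parts of size `m`:
two vertices are adjacent iff they lie in different parts. -/
def multipartite (p m : ℕ) : SimpleGraph (Fin p × Fin m) :=
  (⊤ : SimpleGraph (Fin p)).comap Prod.fst

namespace Equiv.Perm

variable {α : Type*} (σ : Perm α)

theorem zpow_neg_apply_eq_of_zpow_apply_eq {j k : ℤ} {b : α} (h : (σ ^ j) b = (σ ^ k) b) :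
    (σ ^ (-j)) b = (σ ^ (-k)) b := by
  calc (σ ^ (-j)) b = (σ ^ (-j - k)) ((σ ^ k) b) := by rw [← mul_apply, ← zpow_add, sub_add_cancel]
    _ = (σ ^ (-k)) b := by rw [← h, ← mul_apply, ← zpow_add]; congr 2; ring

noncomputable def cycleBase (x : α) : α :=
  (Quotient.mk (SameCycle.setoid σ) x).out

theorem sameCycle_cycleBase (x : α) : σ.SameCycle (σ.cycleBase x) x :=
  Quotient.mk_out (s := SameCycle.setoid σ) x

theorem cycleBase_eq_of_sameCycle {x y : α} (h : σ.SameCycle x y) :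
    σ.cycleBase x = σ.cycleBase y :=
  congrArg Quotient.out (Quotient.sound (s := SameCycle.setoid σ) h)

theorem cycleBase_zpow_apply (x : α) (k : ℤ) :
    σ.cycleBase ((σ ^ k) (σ.cycleBase x)) = σ.cycleBase x :=
  (σ.cycleBase_eq_of_sameCycle ⟨k, rfl⟩).symm.trans
    (σ.cycleBase_eq_of_sameCycle (σ.sameCycle_cycleBase x))

/-- The reflection `σ ^ k b ↦ σ ^ (-k) b` of every cycle of `σ` about its base point `b`. -/
noncomputable def cycleReflect (x : α) : α :=
  (σ ^ (-(σ.sameCycle_cycleBase x).choose)) (σ.cycleBase x)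

theorem cycleReflect_eq {x : α} {k : ℤ} (hk : (σ ^ k) (σ.cycleBase x) = x) :
    σ.cycleReflect x = (σ ^ (-k)) (σ.cycleBase x) :=
  σ.zpow_neg_apply_eq_of_zpow_apply_eq ((σ.sameCycle_cycleBase x).choose_spec.trans hk.symm)

theorem cycleReflect_zpow_apply (x : α) (k : ℤ) :
    σ.cycleReflect ((σ ^ k) (σ.cycleBase x)) = (σ ^ (-k)) (σ.cycleBase x) := by
  rw [σ.cycleReflect_eq (k := k) (by rw [cycleBase_zpow_apply]), cycleBase_zpow_apply]

theorem cycleReflect_involutive : Function.Involutive σ.cycleReflect := by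
  intro x
  obtain ⟨k, hk⟩ := σ.sameCycle_cycleBase x
  rw [← hk, cycleReflect_zpow_apply, cycleReflect_zpow_apply, neg_neg]

theorem cycleReflect_apply_apply_cycleReflect (x : α) :
    σ.cycleReflect (σ (σ.cycleReflect x)) = σ⁻¹ x := by
  obtain ⟨k, hk⟩ := σ.sameCycle_cycleBase x
  rw [← hk, cycleReflect_zpow_apply, ← mul_apply, ← zpow_one_add, cycleReflect_zpow_apply,
    ← zpow_neg_one, ← mul_apply, ← zpow_add]
  congr 2
  ring

theorem exists_involutive_mul_involutive_eq :
    ∃ a b : Perm α, Function.Involutive a ∧ Function.Involutive b ∧ a * b = σ := by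
  set r := σ.cycleReflect_involutive.toPerm
  refine ⟨r, r * σ, σ.cycleReflect_involutive, fun x => ?_, ?_⟩
  · simp [r, cycleReflect_apply_apply_cycleReflect]
  · ext x
    simp [r, σ.cycleReflect_involutive (σ x)]

end Equiv.Perm

section Routing

open Equiv

variable {G : SimpleGraph V}

theorem finalPos_append (L₁ L₂ : List (Perm V)) (v : V) :
    finalPos (L₁ ++ L₂) v = finalPos L₂ (finalPos L₁ v) :=
  List.foldl_append

theorem IsMatchingStep.routesIn_one {g : Perm V} (hg : IsMatchingStep G g) : RoutesIn G g 1 :=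
  ⟨[g], rfl, by simpa using hg, fun _ => rfl⟩

theorem RoutesIn.mul {σ τ : Perm V} {s t : ℕ} (hσ : RoutesIn G σ s) (hτ : RoutesIn G τ t) :
    RoutesIn G (σ * τ) (t + s) := by
  obtain ⟨L, rfl, hL, hLσ⟩ := hσ
  obtain ⟨M, rfl, hM, hMτ⟩ := hτ
  refine ⟨M ++ L, List.length_append, fun g hg => ?_, fun v => ?_⟩
  · rcases List.mem_append.1 hg with hg | hg
    exacts [hM g hg, hL g hg]
  · rw [finalPos_append, hMτ, hLσ, Perm.mul_apply]

theorem rt_le_of_forall_routesIn [Fintype V] [DecidableEq V] {t : ℕ}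
    (h : ∀ σ : Perm V, RoutesIn G σ t) : rt G ≤ t :=
  Finset.sup_le fun σ _ => Nat.sInf_le (h σ)

theorem IsMatchingStep.swap_mul [DecidableEq V] {u y : V} {g : Perm V} (huy : G.Adj u y)
    (hg : IsMatchingStep G g) (hu : g u = u) (hy : g y = y) :
    IsMatchingStep G (swap u y * g) := by
  have hcomm : ∀ x, g (swap u y x) = swap u y (g x) := fun x => by
    rw [← Perm.mul_apply, mul_swap_eq_swap_mul, hu, hy, Perm.mul_apply]
  refine ⟨fun x => by simp only [Perm.mul_apply, hcomm, swap_apply_self, hg.1 x], fun x hx => ?_⟩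
  rw [Perm.mul_apply] at hx ⊢
  by_cases hxu : x = u
  · subst hxu; simpa [hu] using huy
  by_cases hxy : x = y
  · subst hxy; simpa [hy] using huy.symm
  have hgx : g x ≠ x := fun h => hx (by rw [h, swap_apply_of_ne_of_ne hxu hxy])
  have hgxu : g x ≠ u := fun h => hxu (by rw [← hg.1 x, h, hu])
  have hgxy : g x ≠ y := fun h => hxy (by rw [← hg.1 x, h, hy])
  rw [swap_apply_of_ne_of_ne hgxu hgxy]
  exact hg.2 x hgx

end Routing

section Multipartite

open Equiv

variable {ι : Type*}

def MovesWithinPart (part : V → ι) (τ : Perm V) (v : V) : Prop :=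
  τ v ≠ v ∧ part (τ v) = part v

instance [DecidableEq V] [DecidableEq ι] (part : V → ι) (τ : Perm V) :
    DecidablePred (MovesWithinPart part τ) :=
  fun _ => instDecidableAnd

theorem MovesWithinPart.apply {part : V → ι} {τ : Perm V} (hτ : Function.Involutive τ) {v : V}
    (hv : MovesWithinPart part τ v) : MovesWithinPart part τ (τ v) := by
  rw [MovesWithinPart, hτ v]
  exact ⟨hv.1.symm, hv.2.symm⟩

variable [DecidableEq V] {part : V → ι} {τ : Perm V} {u y : V}

theorem swap_mul_mul_swap_apply_of_ne (hτ : Function.Involutive τ) {z : V} (hzu : z ≠ u)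
    (hzy : z ≠ y) (hzτu : z ≠ τ u) (hzτy : z ≠ τ y) : (swap u y * τ * swap u y) z = τ z := by
  have hτzu : τ z ≠ u := fun h => hzτu (by rw [← h, hτ])
  have hτzy : τ z ≠ y := fun h => hzτy (by rw [← h, hτ])
  simp only [Perm.mul_apply, swap_apply_of_ne_of_ne hzu hzy, swap_apply_of_ne_of_ne hτzu hτzy]

theorem swap_mul_mul_swap_apply_apply_left (hτ : Function.Involutive τ) (hu : τ u ≠ u)
    (hτuy : τ u ≠ y) : (swap u y * τ * swap u y) (τ u) = y := by
  simp [swap_apply_of_ne_of_ne hu hτuy, hτ u]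

theorem swap_mul_mul_swap_apply_apply_right (hτ : Function.Involutive τ) (hy : τ y ≠ y)
    (hτyu : τ y ≠ u) : (swap u y * τ * swap u y) (τ y) = u := by
  rw [swap_comm]
  exact swap_mul_mul_swap_apply_apply_left hτ hy hτyu

theorem movesWithinPart_of_swap_mul_mul_swap (hτ : Function.Involutive τ)
    (hu : MovesWithinPart part τ u) (hy : part y ≠ part u) (hτy : part (τ y) ≠ part u) {z : V}
    (hz : MovesWithinPart part (swap u y * τ * swap u y) z) :
    MovesWithinPart part τ z ∧ z ≠ u ∧ z ≠ τ u ∧ z ≠ y ∧ z ≠ τ y := by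
  obtain ⟨hτu, hpu⟩ := hu
  have hτuy : τ u ≠ y := fun h => hy (by rw [← h, hpu])
  have hτyu : τ y ≠ u := fun h => hτy (by rw [h])
  obtain ⟨hzm, hzp⟩ := hz
  have hzu : z ≠ u := by
    rintro rfl
    by_cases hyy : τ y = y
    · exact hzm (by simp [hyy])
    · exact hτy (by simpa [swap_apply_of_ne_of_ne hτyu hyy] using hzp)
  have hzτu : z ≠ τ u := by
    rintro rfl
    rw [swap_mul_mul_swap_apply_apply_left hτ hτu hτuy, hpu] at hzp
    exact hy hzp
  have hzy : z ≠ y := by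
    rintro rfl
    exact hy (by simpa [swap_apply_of_ne_of_ne hτu hτuy, hpu] using hzp.symm)
  have hzτy : z ≠ τ y := by
    rintro rfl
    have hyy : τ y ≠ y := fun h => hzy h
    exact hτy (by simpa [swap_apply_of_ne_of_ne hτyu hyy, hτ y] using hzp.symm)
  rw [swap_mul_mul_swap_apply_of_ne hτ hzu hzy hzτu hzτy] at hzm hzp
  exact ⟨⟨hzm, hzp⟩, hzu, hzτu, hzy, hzτy⟩

variable [DecidableEq ι]

variable (part τ) in
def innerIn (W : Finset V) (q : ι) : Finset V :=
  {v ∈ W | MovesWithinPart part τ v ∧ part v = q}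

variable (part τ) in
def awayIn (W : Finset V) (q : ι) : Finset V :=
  {v ∈ W | part v ≠ q ∧ part (τ v) ≠ q}

variable (part τ) in
def IsBalanced (W : Finset V) : Prop :=
  ∀ q, #(innerIn part τ W q) ≤ #(awayIn part τ W q)

theorem innerIn_swap_mul_mul_swap_subset (hτ : Function.Involutive τ)
    (hu : MovesWithinPart part τ u) (hy : part y ≠ part u) (hτy : part (τ y) ≠ part u)
    (W : Finset V) (q : ι) :
    innerIn part (swap u y * τ * swap u y) (W \ {u, y}) q ⊆ innerIn part τ W q \ {u, τ u} := by
  intro z hz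
  simp only [innerIn, mem_filter, mem_sdiff, mem_insert, mem_singleton, not_or] at hz ⊢
  obtain ⟨hzτ, hzu, hzτu, -⟩ := movesWithinPart_of_swap_mul_mul_swap hτ hu hy hτy hz.2.1
  exact ⟨⟨hz.1.1, hzτ, hz.2.2⟩, hzu, hzτu⟩

theorem card_innerIn_swap_mul_mul_swap_add_two_le (hτ : Function.Involutive τ)
    (hu : MovesWithinPart part τ u) (hy : part y ≠ part u) (hτy : part (τ y) ≠ part u)
    {W : Finset V} (huW : u ∈ W) (hτuW : τ u ∈ W) :
    #(innerIn part (swap u y * τ * swap u y) (W \ {u, y}) (part u)) + 2 ≤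
      #(innerIn part τ W (part u)) := by
  have hsub : {u, τ u} ⊆ innerIn part τ W (part u) := by
    rw [insert_subset_iff, singleton_subset_iff, innerIn, mem_filter, mem_filter]
    refine ⟨⟨huW, hu, rfl⟩, hτuW, ⟨?_, ?_⟩, hu.2⟩ <;> rw [hτ u]
    exacts [hu.1.symm, hu.2.symm]
  have := card_le_card (innerIn_swap_mul_mul_swap_subset hτ hu hy hτy W (part u))
  rw [card_sdiff_of_subset hsub, card_pair hu.1.symm] at this
  have := card_le_card hsub
  rw [card_pair hu.1.symm] at this
  omega

theorem card_awayIn_le_swap_mul_mul_swap_add_two (hτ : Function.Involutive τ)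
    (hu : MovesWithinPart part τ u) (hy : part y ≠ part u) (hτy : part (τ y) ≠ part u)
    (W : Finset V) :
    #(awayIn part τ W (part u)) ≤
      #(awayIn part (swap u y * τ * swap u y) (W \ {u, y}) (part u)) + 2 := by
  have hsub : awayIn part τ W (part u) \ {y, τ y} ⊆
      awayIn part (swap u y * τ * swap u y) (W \ {u, y}) (part u) := by
    intro z hz
    simp only [awayIn, mem_sdiff, mem_filter, mem_insert, mem_singleton, not_or] at hz ⊢
    obtain ⟨⟨hzW, hzp, hτzp⟩, hzy, hzτy⟩ := hz
    have hzu : z ≠ u := by rintro rfl; exact hzp rfl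
    have hzτu : z ≠ τ u := by rintro rfl; exact hτzp (by rw [hτ])
    rw [swap_mul_mul_swap_apply_of_ne hτ hzu hzy hzτu hzτy]
    exact ⟨⟨hzW, hzu, hzy⟩, hzp, hτzp⟩
  calc #(awayIn part τ W (part u))
      ≤ #(awayIn part τ W (part u) \ {y, τ y}) + #({y, τ y} : Finset V) :=
        card_le_card_sdiff_add_card
    _ ≤ _ := add_le_add (card_le_card hsub) card_le_two

theorem card_awayIn_le_swap_mul_mul_swap_add_two_of_ne (hτ : Function.Involutive τ)
    (hu : MovesWithinPart part τ u) (hy : part y ≠ part u) (hτy : part (τ y) ≠ part u)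
    (W : Finset V) {q : ι} (hqu : q ≠ part u) (hqy : q ≠ part y) :
    #(awayIn part τ W q) ≤ #(awayIn part (swap u y * τ * swap u y) (W \ {u, y}) q) + 2 := by
  have hsub : awayIn part τ W q \ {u, y} ⊆
      awayIn part (swap u y * τ * swap u y) (W \ {u, y}) q := by
    intro z hz
    simp only [awayIn, mem_sdiff, mem_filter, mem_insert, mem_singleton, not_or] at hz ⊢
    obtain ⟨⟨hzW, hzp, hτzp⟩, hzu, hzy⟩ := hz
    refine ⟨⟨hzW, hzu, hzy⟩, hzp, ?_⟩
    have hτuy : τ u ≠ y := fun h => hy (by rw [← h, hu.2])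
    have hτyu : τ y ≠ u := fun h => hτy (by rw [h])
    by_cases hzτu : z = τ u
    · rwa [hzτu, swap_mul_mul_swap_apply_apply_left hτ hu.1 hτuy, ne_comm]
    by_cases hzτy : z = τ y
    · rwa [hzτy, swap_mul_mul_swap_apply_apply_right hτ (hzτy ▸ hzy) hτyu, ne_comm]
    rwa [swap_mul_mul_swap_apply_of_ne hτ hzu hzy hzτu hzτy]
  calc #(awayIn part τ W q)
      ≤ #(awayIn part τ W q \ {u, y}) + #({u, y} : Finset V) := card_le_card_sdiff_add_card
    _ ≤ _ := add_le_add (card_le_card hsub) card_le_two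

theorem card_innerIn_le_card_awayIn_swap_mul_mul_swap (hτ : Function.Involutive τ)
    (hu : MovesWithinPart part τ u) (hy : part y ≠ part u) (hτy : part (τ y) ≠ part u)
    {W : Finset V} (huW : u ∈ W) (hτuW : τ u ∈ W)
    (hbal : #(innerIn part τ W (part u)) ≤ #(awayIn part τ W (part u))) :
    #(innerIn part (swap u y * τ * swap u y) (W \ {u, y}) (part u)) ≤
      #(awayIn part (swap u y * τ * swap u y) (W \ {u, y}) (part u)) := by
  have := card_innerIn_swap_mul_mul_swap_add_two_le hτ hu hy hτy huW hτuW
  have := card_awayIn_le_swap_mul_mul_swap_add_two hτ hu hy hτy W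
  omega

theorem isBalanced_swap_mul_mul_swap_of_movesWithinPart (hτ : Function.Involutive τ)
    {W : Finset V} (hbal : IsBalanced part τ W) (hu : MovesWithinPart part τ u)
    (hy : MovesWithinPart part τ y) (hyu : part y ≠ part u)
    (hmax : ∀ q, #(innerIn part τ W q) ≤ #(innerIn part τ W (part u)))
    (huW : u ∈ W) (hτuW : τ u ∈ W) (hyW : y ∈ W) (hτyW : τ y ∈ W) :
    IsBalanced part (swap u y * τ * swap u y) (W \ {u, y}) := by
  have hτyu : part (τ y) ≠ part u := hy.2 ▸ hyu
  intro q
  by_cases hqu : q = part u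
  · subst hqu
    exact card_innerIn_le_card_awayIn_swap_mul_mul_swap hτ hu hyu hτyu huW hτuW (hbal _)
  by_cases hqy : q = part y
  · subst hqy
    rw [swap_comm, pair_comm]
    exact card_innerIn_le_card_awayIn_swap_mul_mul_swap hτ hy hyu.symm (hu.2 ▸ hyu.symm) hyW hτyW
      (hbal _)
  -- For a third part `q`, the vertices moved inside the largest part together with `y` and `τ y`
  -- all avoid `q`; this is the slack that the swap uses up.
  have hsub : innerIn part τ W (part u) ∪ {y, τ y} ⊆ awayIn part τ W q := by
    intro z hz
    simp only [innerIn, awayIn, mem_union, mem_filter, mem_insert, mem_singleton] at hz ⊢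
    rcases hz with ⟨hzW, hz, hzu⟩ | rfl | rfl
    · exact ⟨hzW, hzu ▸ Ne.symm hqu, hz.2 ▸ hzu ▸ Ne.symm hqu⟩
    · exact ⟨hyW, Ne.symm hqy, hy.2 ▸ Ne.symm hqy⟩
    · refine ⟨hτyW, ?_, ?_⟩
      · rw [hy.2]; exact Ne.symm hqy
      · rw [hτ y]; exact Ne.symm hqy
  have hdisj : Disjoint (innerIn part τ W (part u)) {y, τ y} := by
    simp only [disjoint_left, innerIn, mem_filter, mem_insert, mem_singleton, not_or]
    rintro z ⟨-, -, hzu⟩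
    exact ⟨fun h => hyu (h ▸ hzu), fun h => hτyu (h ▸ hzu)⟩
  have hinner := card_le_card ((innerIn_swap_mul_mul_swap_subset hτ hu hyu hτyu W q).trans
    sdiff_subset)
  have haway := card_awayIn_le_swap_mul_mul_swap_add_two_of_ne hτ hu hyu hτyu W hqu hqy
  have := card_le_card hsub
  rw [card_union_of_disjoint hdisj, card_pair hy.1.symm] at this
  have := hmax q
  omega

theorem isBalanced_swap_mul_mul_swap_of_forall (hτ : Function.Involutive τ)
    {W : Finset V} (hbal : IsBalanced part τ W) (hu : MovesWithinPart part τ u)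
    (hall : ∀ v, MovesWithinPart part τ v → part v = part u) (hy : y ∈ awayIn part τ W (part u))
    (huW : u ∈ W) (hτuW : τ u ∈ W) :
    IsBalanced part (swap u y * τ * swap u y) (W \ {u, y}) := by
  simp only [awayIn, mem_filter] at hy
  intro q
  by_cases hqu : q = part u
  · subst hqu
    exact card_innerIn_le_card_awayIn_swap_mul_mul_swap hτ hu hy.2.1 hy.2.2 huW hτuW (hbal _)
  · have : innerIn part (swap u y * τ * swap u y) (W \ {u, y}) q = ∅ := by
      refine eq_empty_of_forall_notMem fun z hz => hqu ?_
      have hz := innerIn_swap_mul_mul_swap_subset hτ hu hy.2.1 hy.2.2 W q hz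
      simp only [innerIn, mem_sdiff, mem_filter] at hz
      exact hz.1.2.2 ▸ hall z hz.1.2.1
    simp [this]

theorem exists_swap_isBalanced (hτ : Function.Involutive τ) {W : Finset V}
    (hin : ∀ v, MovesWithinPart part τ v → v ∈ W) (hbal : IsBalanced part τ W)
    (hmoves : ∃ v, MovesWithinPart part τ v) :
    ∃ u ∈ W, ∃ y ∈ W, MovesWithinPart part τ u ∧ part y ≠ part u ∧ part (τ y) ≠ part u ∧
      IsBalanced part (swap u y * τ * swap u y) (W \ {u, y}) := by
  obtain ⟨u, huS, hmax⟩ := exists_max_image (W.filter (MovesWithinPart part τ))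
    (fun v => #(innerIn part τ W (part v)))
    (let ⟨v, hv⟩ := hmoves; ⟨v, mem_filter.2 ⟨hin v hv, hv⟩⟩)
  obtain ⟨huW, hu⟩ := mem_filter.1 huS
  have hτuW := hin _ (hu.apply hτ)
  by_cases hother : ∃ y, MovesWithinPart part τ y ∧ part y ≠ part u
  · obtain ⟨y, hy, hyu⟩ := hother
    refine ⟨u, huW, y, hin y hy, hu, hyu, hy.2 ▸ hyu,
      isBalanced_swap_mul_mul_swap_of_movesWithinPart hτ hbal hu hy hyu (fun q => ?_) huW hτuW
        (hin y hy) (hin _ (hy.apply hτ))⟩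
    obtain hq | ⟨v, hv⟩ := (innerIn part τ W q).eq_empty_or_nonempty
    · simp [hq]
    · obtain ⟨hvW, hvm, rfl⟩ := mem_filter.1 hv
      exact hmax v (mem_filter.2 ⟨hvW, hvm⟩)
  · push Not at hother
    have huIn : u ∈ innerIn part τ W (part u) := mem_filter.2 ⟨huW, hu, rfl⟩
    obtain ⟨y, hy⟩ := card_pos.1 ((card_pos.2 ⟨u, huIn⟩).trans_le (hbal (part u)))
    obtain ⟨hyW, hyu, hτyu⟩ := mem_filter.1 hy
    exact ⟨u, huW, y, hyW, hu, hyu, hτyu,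
      isBalanced_swap_mul_mul_swap_of_forall hτ hbal hu hother hy huW hτuW⟩

theorem exists_isMatchingStep_conj_of_isBalanced (hτ : Function.Involutive τ) {W : Finset V}
    (hin : ∀ v, MovesWithinPart part τ v → v ∈ W) (hbal : IsBalanced part τ W) :
    ∃ g : Perm V, IsMatchingStep ((⊤ : SimpleGraph ι).comap part) g ∧ (∀ v ∉ W, g v = v) ∧
      IsMatchingStep ((⊤ : SimpleGraph ι).comap part) (g * τ * g) := by
  induction W using Finset.strongInduction generalizing τ with
  | H W ih =>
  by_cases hmoves : ∃ v, MovesWithinPart part τ v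
  · obtain ⟨u, huW, y, hyW, hu, hyu, hτyu, hbal'⟩ := exists_swap_isBalanced hτ hin hbal hmoves
    have hτ' : Function.Involutive (swap u y * τ * swap u y) := fun z => by
      simp only [Perm.mul_apply, swap_apply_self, hτ (swap u y z)]
    have hin' : ∀ v, MovesWithinPart part (swap u y * τ * swap u y) v → v ∈ W \ {u, y} := by
      intro v hv
      obtain ⟨hv, hvu, -, hvy, -⟩ := movesWithinPart_of_swap_mul_mul_swap hτ hu hyu hτyu hv
      simp [hin v hv, hvu, hvy]
    have hW' : W \ {u, y} ⊂ W :=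
      sdiff_ssubset (by simp [insert_subset_iff, huW, hyW]) (insert_nonempty _ _)
    obtain ⟨g, hg, hgW, hgτ⟩ := ih _ hW' hτ' hin' hbal'
    have hgu : g u = u := hgW u (by simp)
    have hgy : g y = y := hgW y (by simp)
    refine ⟨swap u y * g, hg.swap_mul (by simpa using hyu.symm) hgu hgy, fun v hv => ?_, ?_⟩
    · have hvu : v ≠ u := fun h => hv (h ▸ huW)
      have hvy : v ≠ y := fun h => hv (h ▸ hyW)
      rw [Perm.mul_apply, hgW v (by simp [hv]), swap_apply_of_ne_of_ne hvu hvy]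
    · have hcomm : g * swap u y = swap u y * g := by rw [mul_swap_eq_swap_mul, hgu, hgy]
      have hconj : swap u y * g * τ * (swap u y * g) = g * (swap u y * τ * swap u y) * g := by
        rw [← hcomm]
        simp only [mul_assoc]
        rw [hcomm]
      rwa [hconj]
  · push Not at hmoves
    refine ⟨1, ⟨fun _ => rfl, fun v hv => absurd rfl hv⟩, fun _ _ => rfl, ?_⟩
    refine ⟨hτ, fun v hv => ?_⟩
    simpa using fun h => hmoves v ⟨hv, h.symm⟩

theorem isBalanced_univ [Fintype V] (hτ : Function.Involutive τ)
    (hpart : ∀ q, 2 * #{v | part v = q} ≤ Fintype.card V) : IsBalanced part τ univ := by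
  intro q
  have hq := hpart q
  set A : Finset V := {v | part v = q}
  set A' : Finset V := {v | part (τ v) = q}
  have hA' : #A' = #A := card_nbij' τ τ (fun v hv => by simpa [A, A'] using hv)
    (fun v hv => by simpa [A, A', hτ v] using hv) (fun v _ => hτ v) (fun v _ => hτ v)
  have hinner : innerIn part τ univ q ⊆ A ∩ A' := by
    intro v hv
    obtain ⟨-, ⟨-, hτv⟩, hvq⟩ := mem_filter.1 hv
    simp [A, A', hvq, hτv]
  have haway : awayIn part τ univ q = (A ∪ A')ᶜ := by
    ext v
    simp [awayIn, A, A']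
  have := card_le_card hinner
  have := card_union_add_card_inter A A'
  have := card_add_card_compl (A ∪ A')
  rw [haway]
  omega

theorem exists_isMatchingStep_conj [Fintype V]
    (hpart : ∀ q, 2 * #{v | part v = q} ≤ Fintype.card V) (hτ : Function.Involutive τ) :
    ∃ g : Perm V, IsMatchingStep ((⊤ : SimpleGraph ι).comap part) g ∧
      IsMatchingStep ((⊤ : SimpleGraph ι).comap part) (g * τ * g) := by
  obtain ⟨g, hg, -, hgτ⟩ := exists_isMatchingStep_conj_of_isBalanced hτ
    (fun _ _ => mem_univ _) (isBalanced_univ hτ hpart)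
  exact ⟨g, hg, hgτ⟩

theorem routesIn_three_of_involutive [Fintype V]
    (hpart : ∀ q, 2 * #{v | part v = q} ≤ Fintype.card V) (hτ : Function.Involutive τ) :
    RoutesIn ((⊤ : SimpleGraph ι).comap part) τ 3 := by
  obtain ⟨g, hg, hgτ⟩ := exists_isMatchingStep_conj hpart hτ
  have hgg : g * g = 1 := Equiv.ext hg.1
  have hτ_eq : τ = g * (g * τ * g) * g := by
    rw [show g * (g * τ * g) * g = g * g * τ * (g * g) by simp only [mul_assoc], hgg, one_mul,
      mul_one]
  rw [hτ_eq]
  exact (hg.routesIn_one.mul hgτ.routesIn_one).mul hg.routesIn_one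

theorem rt_comap_top_le_six [Fintype V]
    (hpart : ∀ q, 2 * #{v | part v = q} ≤ Fintype.card V) :
    rt ((⊤ : SimpleGraph ι).comap part) ≤ 6 :=
  rt_le_of_forall_routesIn fun σ => by
    obtain ⟨a, b, ha, hb, rfl⟩ := σ.exists_involutive_mul_involutive_eq
    exact (routesIn_three_of_involutive hpart ha).mul (routesIn_three_of_involutive hpart hb)

end Multipartite

theorem stmt14_general (p m : ℕ) (hp : 2 ≤ p) :
    rt (multipartite p m) ≤ 6 := by
  refine rt_comap_top_le_six fun q => ?_
  have hfiber : ({v : Fin p × Fin m | v.1 = q} : Finset _) = {q} ×ˢ univ := by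
    ext ⟨i, j⟩
    simp [eq_comm]
  rw [hfiber, card_product, card_singleton, card_univ, Fintype.card_prod, Fintype.card_fin,
    Fintype.card_fin, one_mul]
  exact Nat.mul_le_mul_right m hp

/-- the complete `p`-partite graph `K_{n/p,…,n/p}` (with `p ≥ 2`
parts of equal size) has routing number at most `6`. -/
theorem stmt14 (p m : ℕ) (hp : 2 ≤ p) (hm : 1 ≤ m) :
    rt (multipartite p m) ≤ 6 :=
  stmt14_general p m hp
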